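/- Let k ≥ 1, let (c_n) be an oscillating sequence of order k, let X be a set, T : X → X any map, and f : X → ℂ with |f(x)| = 1 for all x such that Λ^{k+1} f is identically 1, where (Λf)(x) = f(Tx)·conj(f(x)). Then for every x ∈ X, (1/N) ∑_{n=0}^{N-1} c_n f(T^n x) → 0 as N → ∞. -/

import Mathlib

open Filter Finset

/-- `c` is an oscillating sequence of order `k`. -/
def OscillatingOfOrder (c : ℕ → ℂ) (k : ℕ) : Prop :=
  (∃ l : ℝ, 1 ≤ l ∧
      (fun N : ℕ => ∑ n ∈ Finset.Icc 1 N, ‖c n‖ ^ l)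
        =O[atTop] (fun N : ℕ => (N : ℝ))) ∧
  ∀ P : Polynomial ℝ, P.natDegree ≤ k →
    Tendsto (fun N : ℕ => (N : ℂ)⁻¹ *
        ∑ n ∈ Finset.Icc 1 N, c n * Complex.exp (2 * Real.pi * Complex.I * (P.eval (n : ℝ))))
      atTop (nhds 0)

/-- The derived homomorphism `(Λ f) x = f (T x) · conj (f x)` on complex valued functions. -/
def derivedHom {X : Type*} (T : X → X) (f : X → ℂ) : X → ℂ :=
  fun x => f (T x) * (starRingEnd ℂ) (f x)


/-!
Since `|f| = 1`, `f` takes values in the circle group, where `Λ` is the forward difference along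
orbits: `(Λ^j f)(T^n x)` is the `j`-th difference of `n ↦ f (T^n x)` at `n`. That sequence thus
has vanishing `(k+1)`-st difference, and Newton's forward-difference formula gives
`f (T^n x) = ∏_{j ≤ k} (Λ^j f x)^(n choose j) = e(P n)` for a real polynomial `P` of degree at
most `k`. The hypothesis on `c` applied to `P` then gives the claim, up to the shift from
`1 ≤ n ≤ N` to `0 ≤ n < N`.
-/

open Polynomial
open scoped Nat fwdDiff FourierTransform

noncomputable def binomPoly (K : Type*) [Field K] (k : ℕ) : K[X] :=
  C (k ! : K)⁻¹ * descPochhammer K k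

theorem binomPoly_eval_natCast {K : Type*} [Field K] [CharZero K] (k n : ℕ) :
    (binomPoly K k).eval (n : K) = n.choose k := by
  rw [binomPoly, eval_mul, eval_C, Nat.cast_choose_eq_descPochhammer_div, inv_mul_eq_div]

theorem natDegree_binomPoly_le {K : Type*} [Field K] (k : ℕ) : (binomPoly K k).natDegree ≤ k :=
  (natDegree_C_mul_le _ _).trans (descPochhammer_natDegree K k).le

theorem Real.fourierChar_surjective : Function.Surjective 𝐞 := by
  intro z
  obtain ⟨s, rfl⟩ := Circle.exp_surjective z
  exact ⟨s / (2 * Real.pi), by rw [Real.fourierChar_apply']; field_simp⟩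

theorem Real.coe_fourierChar_eq_exp (t : ℝ) :
    (𝐞 t : ℂ) = Complex.exp (2 * Real.pi * Complex.I * t) := by
  rw [Real.fourierChar_apply]
  push_cast
  ring_nf

theorem fwdDiff_iter_eq_zero_of_le {M G : Type*} [AddCommMonoid M] [AddCommGroup G] (h : M)
    {f : M → G} {m k : ℕ} (hf : Δ_[h] ^[m] f = 0) (hmk : m ≤ k) : Δ_[h] ^[k] f = 0 := by
  obtain ⟨j, rfl⟩ := Nat.exists_eq_add_of_le hmk
  rw [add_comm, Function.iterate_add_apply, hf]
  exact Function.iterate_fixed (fwdDiff_const h (0 : G)) j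

theorem eq_sum_fwdDiff_iter_of_fwdDiff_iter_eq_zero {G : Type*} [AddCommGroup G] {f : ℕ → G}
    {m : ℕ} (hf : Δ_[1] ^[m + 1] f = 0) (n : ℕ) :
    f n = ∑ k ∈ range (m + 1), n.choose k • Δ_[1] ^[k] f 0 := by
  have hvanish : ∀ k, min n m < k → n.choose k • Δ_[1] ^[k] f 0 = 0 := by
    intro k hk
    rcases lt_or_ge n k with hnk | hmk
    · rw [Nat.choose_eq_zero_of_lt hnk, zero_smul]
    · rw [fwdDiff_iter_eq_zero_of_le 1 hf (by omega), Pi.zero_apply, smul_zero]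
  have htruncate : ∀ l, min n m ≤ l → ∑ k ∈ range (l + 1), n.choose k • Δ_[1] ^[k] f 0 =
      ∑ k ∈ range (min n m + 1), n.choose k • Δ_[1] ^[k] f 0 := fun l hl =>
    (sum_subset (range_subset_range.2 (by omega)) fun k hk hk' => hvanish k
      (by simp only [mem_range] at hk hk'; omega)).symm
  calc f n = f (0 + n • 1) := by simp
    _ = ∑ k ∈ range (m + 1), n.choose k • Δ_[1] ^[k] f 0 := by
      rw [shift_eq_sum_fwdDiff_iter 1 f n 0, htruncate n (min_le_left _ _),
        htruncate m (min_le_right _ _)]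

theorem exists_poly_eq_fourierChar_of_fwdDiff_iter_eq_zero {m : ℕ} {u : ℕ → Circle}
    (hu : Δ_[1] ^[m + 1] (Additive.ofMul ∘ u) = 0) :
    ∃ P : ℝ[X], P.natDegree ≤ m ∧ ∀ n : ℕ, u n = 𝐞 (P.eval (n : ℝ)) := by
  set w := Additive.ofMul ∘ u
  choose a ha using fun k => Real.fourierChar_surjective (Additive.toMul (Δ_[1] ^[k] w 0))
  refine ⟨∑ k ∈ range (m + 1), C (a k) * binomPoly ℝ k,
    natDegree_sum_le_of_forall_le _ _ fun k hk => ?_, fun n => Additive.ofMul.injective ?_⟩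
  · exact (natDegree_C_mul_le _ _).trans
      ((natDegree_binomPoly_le k).trans (Nat.lt_succ_iff.1 (mem_range.1 hk)))
  calc Additive.ofMul (u n) = ∑ k ∈ range (m + 1), n.choose k • Δ_[1] ^[k] w 0 :=
        eq_sum_fwdDiff_iter_of_fwdDiff_iter_eq_zero hu n
    _ = Additive.ofMul (𝐞 (∑ k ∈ range (m + 1), a k * n.choose k)) := by
      rw [← AddChar.toAddMonoidHom_apply, map_sum]
      refine sum_congr rfl fun k _ => ?_
      rw [mul_comm, ← nsmul_eq_mul, map_nsmul, AddChar.toAddMonoidHom_apply, ha]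
      rfl
    _ = Additive.ofMul (𝐞 ((∑ k ∈ range (m + 1), C (a k) * binomPoly ℝ k).eval (n : ℝ))) := by
      simp [eval_finsetSum, binomPoly_eval_natCast]

theorem derivedHom_coe_circle {X : Type*} (T : X → X) (g : X → Circle) :
    derivedHom T (fun x => (g x : ℂ)) = fun x => ((g (T x) / g x : Circle) : ℂ) := by
  funext x
  rw [derivedHom, div_eq_mul_inv, Circle.coe_mul, Circle.coe_inv_eq_conj]

theorem derivedHom_iterate_coe_circle_apply_iterate {X : Type*} (T : X → X) (x : X) (j : ℕ)
    (g : X → Circle) (n : ℕ) : (derivedHom T)^[j] (fun y => (g y : ℂ)) (T^[n] x) =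
      Additive.toMul (Δ_[1] ^[j] (fun i => Additive.ofMul (g (T^[i] x))) n) := by
  induction j generalizing g with
  | zero => rfl
  | succ j ih =>
    have horbit : (fun i => Additive.ofMul (g (T (T^[i] x)) / g (T^[i] x))) =
        Δ_[1] (fun i => Additive.ofMul (g (T^[i] x))) := by
      funext i
      rw [fwdDiff, ← ofMul_div, ← Function.iterate_succ_apply' T i x]
    rw [Function.iterate_succ_apply, derivedHom_coe_circle, ih, horbit,
      Function.iterate_succ_apply]

theorem tendsto_inv_mul_sum_range_of_tendsto_inv_mul_sum_Icc {𝕜 : Type*} [RCLike 𝕜] (a : ℕ → 𝕜)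
    (h : Tendsto (fun N : ℕ => (N : 𝕜)⁻¹ * ∑ n ∈ Icc 1 N, a n) atTop (nhds 0)) :
    Tendsto (fun N : ℕ => (N : 𝕜)⁻¹ * ∑ n ∈ range N, a n) atTop (nhds 0) := by
  rw [← tendsto_add_atTop_iff_nat 1]
  have hsplit : ∀ N : ℕ, ((N + 1 : ℕ) : 𝕜)⁻¹ * ∑ n ∈ range (N + 1), a n =
      ((N : 𝕜) + 1)⁻¹ * a 0 + (N / (N + 1)) * ((N : 𝕜)⁻¹ * ∑ n ∈ Icc 1 N, a n) := by
    intro N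
    rcases eq_or_ne (N : 𝕜) 0 with hN | hN
    · simp [Nat.cast_eq_zero.1 hN]
    have hsum : ∑ n ∈ range (N + 1), a n = a 0 + ∑ n ∈ Icc 1 N, a n := by
      rw [Nat.range_succ_eq_Icc_zero, Icc_eq_cons_Ioc N.zero_le, sum_cons,
        ← Icc_add_one_left_eq_Ioc, zero_add]
    rw [hsum]
    field_simp
    push_cast
    ring
  simp_rw [hsplit]
  simpa using ((tendsto_inv_atTop_nhds_zero_nat (𝕜 := 𝕜)).comp (tendsto_add_atTop_nat 1)
    |>.mul_const (a 0)).add ((tendsto_natCast_div_add_atTop (1 : 𝕜)).mul h)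

theorem oscillating_orthogonal_to_quasiEigenfunction
    {X : Type*} (T : X → X) (k : ℕ) (c : ℕ → ℂ)
    (hc : OscillatingOfOrder c k) (f : X → ℂ)
    (hmod : ∀ x, ‖f x‖ = 1)
    (hquasi : ∀ x, ((derivedHom T)^[k + 1] f) x = 1) :
    ∀ x : X,
      Tendsto (fun N : ℕ => (N : ℂ)⁻¹ * ∑ n ∈ Finset.range N, c n * f (T^[n] x))
        atTop (nhds 0) := by
  intro x
  let g : X → Circle := fun y => ⟨f y, mem_sphere_zero_iff_norm.2 (hmod y)⟩
  have hfg : f = fun y => (g y : ℂ) := rfl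
  have hdiff : Δ_[1] ^[k + 1] (Additive.ofMul ∘ fun n => g (T^[n] x)) = 0 := by
    funext n
    have := hquasi (T^[n] x)
    rwa [hfg, derivedHom_iterate_coe_circle_apply_iterate, Circle.coe_eq_one, toMul_eq_one] at this
  obtain ⟨P, hPdeg, hP⟩ := exists_poly_eq_fourierChar_of_fwdDiff_iter_eq_zero hdiff
  have horbit : ∀ n, f (T^[n] x) = Complex.exp (2 * Real.pi * Complex.I * P.eval (n : ℝ)) :=
    fun n => (congrArg ((↑) : Circle → ℂ) (hP n)).trans (Real.coe_fourierChar_eq_exp _)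
  simp_rw [horbit]
  exact tendsto_inv_mul_sum_range_of_tendsto_inv_mul_sum_Icc _ (hc.2 P hPdeg)
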